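/- arXiv:1605.05287 — 4 statements merged into one kernel-verified Lean document; each statement's English description precedes it below -/
import Mathlib

section
/- If the polynomials f₁(x), …, f_n(x) ∈ ℝ[x] have positive leading coefficients, then they are pairwise compatible if and only if they are compatible. -/
/-!
Compatible ⇒ pairwise compatible: a combination `p = ∑ cⱼ fⱼ` with `cⱼ ≥ 0` is a limit of the
positive combinations `p + μ ∑ fⱼ`. If `p` had a non-real zero `z`, the open mapping theorem for
`-p / ∑ fⱼ` near `z` would give a non-real zero of some `p + μ ∑ fⱼ` with `μ > 0`.

Pairwise compatible ⇒ compatible: fix `z` non-real and `R` with every `fⱼ` positive on `(R, ∞)`.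
On the slit domain `ℂ ∖ (-∞, R]`, pairwise compatibility keeps every ratio `fᵢ / fⱼ` off
`(-∞, 0]`. So `arg (fᵢ / f₀) - arg (fⱼ / f₀)`, which is continuous there and vanishes on `(R, ∞)`,
never reaches `±π`. Hence the numbers `fⱼ(z) / f₀(z)` have arguments in an arc shorter than `π`,
they lie in an open half-plane, and no positive combination of them vanishes.
-/

open Polynomial Finset

/-- A real polynomial is real-rooted (has only real zeros) if all of its complex
zeros are real; by convention constant polynomials, including `0`, are real-rooted. -/
def RealRooted (f : Polynomial ℝ) : Prop :=
  f = 0 ∨ ∀ z : ℂ, Polynomial.aeval z f = 0 → z.im = 0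

/-- Two polynomials are compatible if every conic combination with positive
coefficients is real-rooted. -/
def CompatiblePair (f g : Polynomial ℝ) : Prop :=
  ∀ c d : ℝ, 0 < c → 0 < d → RealRooted (Polynomial.C c * f + Polynomial.C d * g)

/-- A family of polynomials is compatible if every conic combination with positive
coefficients is real-rooted. -/
def Compatible {k : ℕ} (f : Fin k → Polynomial ℝ) : Prop :=
  ∀ c : Fin k → ℝ, (∀ j, 0 < c j) → RealRooted (∑ j, Polynomial.C (c j) * f j)

open Complex Filter Set Topology
open scoped Real

namespace Polynomial

lemma leadingCoeff_add_pos {p q : ℝ[X]} (hp : 0 < p.leadingCoeff) (hq : 0 < q.leadingCoeff) :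
    0 < (p + q).leadingCoeff := by
  rcases lt_trichotomy p.degree q.degree with h | h | h
  · rwa [leadingCoeff_add_of_degree_lt h]
  · rw [leadingCoeff_add_of_degree_eq h (add_pos hp hq).ne']
    exact add_pos hp hq
  · rwa [leadingCoeff_add_of_degree_lt' h]

lemma leadingCoeff_C_mul_pos {p : ℝ[X]} {c : ℝ} (hc : 0 < c) (hp : 0 < p.leadingCoeff) :
    0 < (C c * p).leadingCoeff := by
  rw [leadingCoeff_mul, leadingCoeff_C]
  exact mul_pos hc hp

lemma leadingCoeff_sum_C_mul_pos {ι : Type*} {s : Finset ι} (hs : s.Nonempty) {f : ι → ℝ[X]}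
    {c : ι → ℝ} (hf : ∀ j ∈ s, 0 < (f j).leadingCoeff) (hc : ∀ j ∈ s, 0 < c j) :
    0 < (∑ j ∈ s, C (c j) * f j).leadingCoeff := by
  induction hs using Finset.Nonempty.cons_induction with
  | singleton j => simpa using leadingCoeff_C_mul_pos (hc j (by simp)) (hf j (by simp))
  | cons j s hj hs ih =>
    simp only [mem_cons, forall_eq_or_imp] at hf hc
    rw [sum_cons]
    exact leadingCoeff_add_pos (leadingCoeff_C_mul_pos hc.1 hf.1) (ih hf.2 hc.2)

lemma eventually_atTop_eval_pos {p : ℝ[X]} (hp : 0 < p.leadingCoeff) :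
    ∀ᶠ x in atTop, 0 < p.eval x := by
  obtain ⟨b, hb⟩ := (finite_setOfPred_isRoot (leadingCoeff_ne_zero.1 hp.ne')).bddAbove
  filter_upwards [eventually_gt_atTop b] with x hx
  exact zero_lt_eval_of_roots_lt_of_leadingCoeff_nonneg (fun y hy => (hb hy).trans_lt hx) hp.le

lemma not_eventually_aeval_eq_zero {p : ℝ[X]} (hp : p ≠ 0) (z : ℂ) :
    ¬∀ᶠ w in 𝓝 z, aeval w p = 0 := by
  intro h
  refine hp (map_injective (algebraMap ℝ ℂ) (algebraMap ℝ ℂ).injective ?_)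
  rw [Polynomial.map_zero]
  refine eq_zero_of_infinite_isRoot _ (infinite_of_mem_nhds z (mem_of_superset h ?_))
  intro w hw
  simpa [IsRoot, eval_map_algebraMap] using hw

end Polynomial

open Polynomial

lemma RealRooted.aeval_ne_zero {p : ℝ[X]} (hp : RealRooted p) (hp0 : p ≠ 0) {z : ℂ}
    (hz : z.im ≠ 0) : aeval z p ≠ 0 :=
  mt (hp.resolve_left hp0 z) hz

namespace CompatiblePair

variable {f g : ℝ[X]} {z : ℂ}

lemma ofReal_mul_aeval_add_ne_zero (h : CompatiblePair f g) (hf : 0 < f.leadingCoeff)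
    (hg : 0 < g.leadingCoeff) {c d : ℝ} (hc : 0 < c) (hd : 0 < d) (hz : z.im ≠ 0) :
    (c : ℂ) * aeval z f + d * aeval z g ≠ 0 := by
  have hne := leadingCoeff_add_pos (leadingCoeff_C_mul_pos hc hf) (leadingCoeff_C_mul_pos hd hg)
  simpa using (h c d hc hd).aeval_ne_zero (leadingCoeff_ne_zero.1 hne.ne') hz

lemma aeval_div_mem_slitPlane (h : CompatiblePair f g) (hf : 0 < f.leadingCoeff)
    (hg : 0 < g.leadingCoeff) (hz : z.im ≠ 0) (hfz : aeval z f ≠ 0) (hgz : aeval z g ≠ 0) :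
    aeval z f / aeval z g ∈ slitPlane := by
  set r := aeval z f / aeval z g
  by_contra hr
  obtain ⟨hre, him⟩ : r.re ≤ 0 ∧ r.im = 0 := by simpa [mem_slitPlane_iff] using hr
  have hfg : aeval z f = (r.re : ℂ) * aeval z g := by
    rw [← div_mul_cancel₀ (aeval z f) hgz]
    congr 1
    exact Complex.ext rfl (by rw [ofReal_im]; exact him)
  have hre' : r.re < 0 := hre.lt_of_ne fun h0 => hfz (by simp [hfg, h0])
  refine h.ofReal_mul_aeval_add_ne_zero hf hg one_pos (neg_pos.2 hre') hz ?_
  rw [hfg]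
  push_cast
  ring

end CompatiblePair

namespace Complex

lemma abs_arg_sub_lt_pi_of_isPreconnected {X : Type*} [TopologicalSpace X] {S : Set X}
    (hS : IsPreconnected S) {p q : X → ℂ} (hp : ContinuousOn p S) (hq : ContinuousOn q S)
    (hpS : MapsTo p S slitPlane) (hqS : MapsTo q S slitPlane)
    (hpq : ∀ u ∈ S, p u / q u ∈ slitPlane) {x₀ : X} (hx₀ : x₀ ∈ S)
    (h₀ : |arg (p x₀) - arg (q x₀)| < π) {u : X} (hu : u ∈ S) :
    |arg (p u) - arg (q u)| < π := by
  set d : X → ℝ := fun u => arg (p u) - arg (q u)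
  have hd : ContinuousOn d S := (continuousOn_arg.comp hp hpS).sub (continuousOn_arg.comp hq hqS)
  -- `arg (p / q) ≡ d` modulo `2π`, and `arg (p / q) ≠ π` on the slit plane
  have hd_ne : ∀ v ∈ S, |d v| ≠ π := by
    intro v hv hdv
    apply slitPlane_arg_ne_pi (hpq v hv)
    have hangle : (arg (p v / q v) : Real.Angle) = π := by
      rw [arg_div_coe_angle (slitPlane_ne_zero (hpS hv)) (slitPlane_ne_zero (hqS hv)),
        ← Real.Angle.coe_sub]
      rcases (abs_eq Real.pi_pos.le).1 hdv with h | h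
      · exact congrArg _ h
      · exact (congrArg _ h).trans (by simp)
    rw [← arg_coe_angle_toReal_eq_arg, hangle, Real.Angle.toReal_pi]
  rw [abs_lt] at h₀ ⊢
  by_contra hout
  rcases le_or_gt π (d u) with hπ | hπ
  · obtain ⟨v, hv, hdv⟩ := hS.intermediate_value hx₀ hu hd ⟨h₀.2.le, hπ⟩
    exact hd_ne v hv (by rw [hdv, abs_of_pos Real.pi_pos])
  · have hπ' : d u ≤ -π := not_lt.1 fun h => hout ⟨h, hπ⟩
    obtain ⟨v, hv, hdv⟩ := hS.intermediate_value hu hx₀ hd ⟨hπ', h₀.1.le⟩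
    exact hd_ne v hv (by rw [hdv, abs_neg, abs_of_pos Real.pi_pos])

lemma re_exp_neg_mul_I_mul (φ : ℝ) (w : ℂ) :
    (exp (-(φ * I)) * w).re = ‖w‖ * Real.cos (arg w - φ) := by
  conv_lhs => rw [← norm_mul_exp_arg_mul_I w, mul_left_comm, ← exp_add]
  rw [← exp_ofReal_mul_I_re (arg w - φ), re_ofReal_mul]
  push_cast
  ring_nf

lemma sum_ofReal_mul_ne_zero_of_arg_sub_lt_pi {ι : Type*} [Fintype ι] [Nonempty ι] {w : ι → ℂ}
    (hw : ∀ j, w j ≠ 0) (harg : ∀ i j, arg (w i) - arg (w j) < π) {c : ι → ℝ}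
    (hc : ∀ j, 0 < c j) : ∑ j, (c j : ℂ) * w j ≠ 0 := by
  obtain ⟨i, -, hi⟩ := exists_max_image univ (fun j => arg (w j)) univ_nonempty
  obtain ⟨k, -, hk⟩ := exists_min_image univ (fun j => arg (w j)) univ_nonempty
  set φ := (arg (w i) + arg (w k)) / 2 with hφ
  have hcos : ∀ j, 0 < Real.cos (arg (w j) - φ) := fun j =>
    Real.cos_pos_of_mem_Ioo ⟨by linarith [hk j (mem_univ _), harg i k, hφ],
      by linarith [hi j (mem_univ _), harg i k, hφ]⟩
  have hre : 0 < (exp (-(φ * I)) * ∑ j, (c j : ℂ) * w j).re := by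
    rw [mul_sum, re_sum]
    refine sum_pos (fun j _ => ?_) univ_nonempty
    rw [mul_left_comm, re_ofReal_mul, re_exp_neg_mul_I_mul]
    exact mul_pos (hc j) (mul_pos (norm_pos_iff.2 (hw j)) (hcos j))
  intro h
  rw [h, mul_zero, zero_re] at hre
  exact lt_irrefl _ hre

end Complex

namespace AnalyticAt

lemma exists_add_ofReal_mul_eq_zero {p q : ℂ → ℂ} {z : ℂ} (hp : AnalyticAt ℂ p z)
    (hq : AnalyticAt ℂ q z) (hpz : p z = 0) (hp0 : ¬∀ᶠ w in 𝓝 z, p w = 0) {U : Set ℂ}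
    (hU : U ∈ 𝓝 z) : ∃ μ : ℝ, 0 < μ ∧ ∃ w ∈ U, p w + μ * q w = 0 := by
  by_cases hqz : q z = 0
  · exact ⟨1, one_pos, z, mem_of_mem_nhds hU, by simp [hpz, hqz]⟩
  have hq_ne : ∀ᶠ w in 𝓝 z, q w ≠ 0 := hq.continuousAt.eventually_ne hqz
  rcases (hp.neg.div hq hqz).eventually_constant_or_nhds_le_map_nhds with hconst | hopen
  · refine absurd ?_ hp0
    filter_upwards [hconst, hq_ne] with w hw hqw
    simpa [hpz, hqw] using hw
  · have himage : (fun w => -p w / q w) '' (U ∩ {w | q w ≠ 0}) ∈ 𝓝 (0 : ℂ) := by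
      simpa [hpz] using hopen (image_mem_map (inter_mem hU hq_ne))
    have hreal := ((continuous_ofReal.tendsto' 0 0 ofReal_zero).mono_left
      nhdsWithin_le_nhds).eventually_mem (l₁ := 𝓝[>] (0 : ℝ)) himage
    obtain ⟨μ, ⟨w, ⟨hwU, hqw : q w ≠ 0⟩, hw⟩, hμ⟩ := (hreal.and self_mem_nhdsWithin).exists
    refine ⟨μ, hμ, w, hwU, ?_⟩
    rw [← hw]
    field_simp
    ring

end AnalyticAt

section PairwiseToCompatible

variable {ι : Type*} {f : ι → ℝ[X]} {R : ℝ}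

lemma aeval_ofReal_div_aeval_ofReal (p q : ℝ[X]) (x : ℝ) :
    aeval (x : ℂ) p / aeval (x : ℂ) q = ((p.eval x / q.eval x : ℝ) : ℂ) := by
  rw [ofReal_div]
  exact congrArg₂ (· / ·) (aeval_ofReal p x) (aeval_ofReal q x)

lemma aeval_div_mem_slitPlane_of_compatiblePair (hlead : ∀ i, 0 < (f i).leadingCoeff)
    (hpair : ∀ i j, CompatiblePair (f i) (f j)) (hR : ∀ x, R < x → ∀ j, 0 < (f j).eval x)
    {w : ℂ} (hw : R < w.re ∨ w.im ≠ 0) (i j : ι) :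
    aeval w (f i) / aeval w (f j) ∈ slitPlane := by
  by_cases him : w.im = 0
  · have hRw : R < w.re := hw.resolve_right (not_not.2 him)
    rw [← re_add_im w, him, ofReal_zero, zero_mul, add_zero, aeval_ofReal_div_aeval_ofReal]
    exact ofReal_mem_slitPlane.2 (div_pos (hR _ hRw i) (hR _ hRw j))
  · have hne : ∀ l, aeval w (f l) ≠ 0 := fun l h0 =>
      (hpair l l).ofReal_mul_aeval_add_ne_zero (hlead l) (hlead l) one_pos one_pos him
        (by simp [h0])
    exact (hpair i j).aeval_div_mem_slitPlane (hlead i) (hlead j) him (hne i) (hne j)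

lemma abs_arg_aeval_div_sub_lt_pi (hlead : ∀ i, 0 < (f i).leadingCoeff)
    (hpair : ∀ i j, CompatiblePair (f i) (f j)) (hR : ∀ x, R < x → ∀ j, 0 < (f j).eval x)
    {z : ℂ} (hz : z.im ≠ 0) (i j j₀ : ι) :
    |arg (aeval z (f i) / aeval z (f j₀)) - arg (aeval z (f j) / aeval z (f j₀))| < π := by
  set S := (· + (R : ℂ)) '' slitPlane
  have hS : IsPreconnected S :=
    (starConvex_one_slitPlane.isPathConnected one_mem_slitPlane).isConnected.isPreconnected.image
      _ (continuous_add_const _).continuousOn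
  have hdiv : ∀ w ∈ S, ∀ i j, aeval w (f i) / aeval w (f j) ∈ slitPlane := by
    rintro _ ⟨v, hv, rfl⟩
    refine aeval_div_mem_slitPlane_of_compatiblePair hlead hpair hR ?_
    simpa [mem_slitPlane_iff] using hv
  have hcont : ∀ l, ContinuousOn (fun w => aeval w (f l) / aeval w (f j₀)) S := fun l =>
    (f l).continuous_aeval.continuousOn.div (f j₀).continuous_aeval.continuousOn fun w hw =>
      (div_ne_zero_iff.1 (slitPlane_ne_zero (hdiv w hw j₀ j₀))).1
  have hx₀ : ((R + 1 : ℝ) : ℂ) ∈ S := ⟨1, one_mem_slitPlane, by push_cast; ring⟩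
  have harg₀ : ∀ l, arg (aeval ((R + 1 : ℝ) : ℂ) (f l) / aeval ((R + 1 : ℝ) : ℂ) (f j₀)) = 0 :=
    fun l => by
      rw [aeval_ofReal_div_aeval_ofReal]
      exact arg_ofReal_of_nonneg (div_pos (hR _ (by linarith) l) (hR _ (by linarith) j₀)).le
  refine abs_arg_sub_lt_pi_of_isPreconnected hS (hcont i) (hcont j) (fun w hw => hdiv w hw i j₀)
    (fun w hw => hdiv w hw j j₀) (fun w hw => ?_) hx₀
    (by rw [harg₀, harg₀, sub_zero, abs_zero]; exact Real.pi_pos)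
    ⟨z - R, by simpa [mem_slitPlane_iff] using Or.inr hz, by simp⟩
  have hj₀ := (div_ne_zero_iff.1 (slitPlane_ne_zero (hdiv w hw j₀ j₀))).1
  rw [div_div_div_cancel_right₀ hj₀]
  exact hdiv w hw i j

end PairwiseToCompatible

theorem compatible_of_forall_compatiblePair {k : ℕ} {f : Fin k → ℝ[X]}
    (hlead : ∀ i, 0 < (f i).leadingCoeff) (hpair : ∀ i j, CompatiblePair (f i) (f j)) :
    Compatible f := by
  intro c hc
  rcases isEmpty_or_nonempty (Fin k) with hk | hk
  · exact Or.inl (by simp)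
  obtain ⟨j₀⟩ := id hk
  refine Or.inr fun z hz => by_contra fun him => ?_
  obtain ⟨R, hR⟩ : ∃ R : ℝ, ∀ x, R < x → ∀ j, 0 < (f j).eval x := by
    obtain ⟨R, hR⟩ := eventually_atTop.1
      (eventually_all.2 fun j => eventually_atTop_eval_pos (hlead j))
    exact ⟨R, fun x hx => hR x hx.le⟩
  have hne : ∀ j, aeval z (f j) ≠ 0 := fun j h0 =>
    (hpair j j).ofReal_mul_aeval_add_ne_zero (hlead j) (hlead j) one_pos one_pos him
      (by simp [h0])
  have hsum := sum_ofReal_mul_ne_zero_of_arg_sub_lt_pi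
    (w := fun j => aeval z (f j) / aeval z (f j₀)) (fun j => div_ne_zero (hne j) (hne j₀))
    (fun i j => (le_abs_self _).trans_lt (abs_arg_aeval_div_sub_lt_pi hlead hpair hR him i j j₀))
    hc
  refine mul_ne_zero (hne j₀) hsum ?_
  calc aeval z (f j₀) * ∑ j, (c j : ℂ) * (aeval z (f j) / aeval z (f j₀))
      = aeval z (∑ j, C (c j) * f j) := by
        rw [mul_sum, map_sum]
        refine sum_congr rfl fun j _ => ?_
        rw [map_mul, aeval_C, coe_algebraMap]
        field_simp [hne j₀]
    _ = 0 := hz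

lemma Compatible.realRooted_sum_of_nonneg {k : ℕ} {f : Fin k → ℝ[X]} (hf : Compatible f)
    (hlead : ∀ j, 0 < (f j).leadingCoeff) {c : Fin k → ℝ} (hc : ∀ j, 0 ≤ c j) :
    RealRooted (∑ j, C (c j) * f j) := by
  set p := ∑ j, C (c j) * f j
  by_cases hp : p = 0
  · exact Or.inl hp
  refine Or.inr fun z hz => by_contra fun him => ?_
  obtain ⟨j, -, -⟩ := exists_ne_zero_of_sum_ne_zero hp
  obtain ⟨μ, hμ, w, hw : w.im ≠ 0, hpw⟩ := AnalyticAt.exists_add_ofReal_mul_eq_zero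
    (analyticAt_id.aeval_polynomial p) (analyticAt_id.aeval_polynomial (∑ j, f j)) hz
    (not_eventually_aeval_eq_zero hp z)
    ((isOpen_ne_fun continuous_im continuous_const).mem_nhds him)
  have hpos : ∀ j, 0 < c j + μ := fun j => add_pos_of_nonneg_of_pos (hc j) hμ
  have hne := leadingCoeff_sum_C_mul_pos (univ_nonempty_iff.2 ⟨j⟩) (fun j _ => hlead j)
    (fun j _ => hpos j)
  refine (hf _ hpos).aeval_ne_zero (leadingCoeff_ne_zero.1 hne.ne') hw ?_
  simpa [p, add_mul, sum_add_distrib, mul_sum] using hpw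

lemma Compatible.compatiblePair {k : ℕ} {f : Fin k → ℝ[X]} (hf : Compatible f)
    (hlead : ∀ j, 0 < (f j).leadingCoeff) (i j : Fin k) : CompatiblePair (f i) (f j) := by
  intro c d hc hd
  have hcd : (0 : Fin k → ℝ) ≤ Pi.single i c + Pi.single j d :=
    add_nonneg (Pi.single_nonneg.2 hc.le) (Pi.single_nonneg.2 hd.le)
  convert hf.realRooted_sum_of_nonneg hlead (c := Pi.single i c + Pi.single j d) hcd using 1
  simp [add_mul, sum_add_distrib, Pi.single_apply, apply_ite C, ite_mul]

/-- Chudnovsky–Seymour: polynomials with positive leading coefficients are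
pairwise compatible if and only if they are compatible. -/
theorem stmt1 {n : ℕ} (f : Fin n → Polynomial ℝ)
    (hlead : ∀ i, 0 < (f i).leadingCoeff) :
    (∀ i j : Fin n, CompatiblePair (f i) (f j)) ↔ Compatible f :=
  ⟨compatible_of_forall_compatiblePair hlead, fun h => h.compatiblePair hlead⟩
end

section
/- For any entries a, b ∈ {0, 1, x}, neither of the 2 × 2 matrices [[x, a], [1, b]] nor [[a, x], [b, 1]] (i.e., any 2 × 2 matrix over {0, 1, x} having a column equal to (x, 1)ᵀ) maps F₂⁺ to F₂⁺. -/
open Polynomial Finset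

/-- The real roots of `f`, with multiplicity, listed in decreasing order. -/
noncomputable def rootsDesc (f : Polynomial ℝ) : List ℝ :=
  f.roots.sort (· ≥ ·)

/-- The chain condition `⋯ ≤ α₂ ≤ β₂ ≤ α₁ ≤ β₁` on the decreasingly ordered
roots of `f` and `g` (`α` the roots of `f`, `β` those of `g`; here 0-indexed). -/
def RootsInterleave (f g : Polynomial ℝ) : Prop :=
  (∀ (i : ℕ) (h1 : i < (rootsDesc f).length) (h2 : i < (rootsDesc g).length),
      (rootsDesc f).get ⟨i, h1⟩ ≤ (rootsDesc g).get ⟨i, h2⟩) ∧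
  (∀ (i : ℕ) (h1 : i < (rootsDesc f).length) (h2 : i + 1 < (rootsDesc g).length),
      (rootsDesc g).get ⟨i + 1, h2⟩ ≤ (rootsDesc f).get ⟨i, h1⟩)

/-- `Interleaver f g` means `f ≪ g`: both are real-rooted and either one of them is `0`
(the convention `f ≪ 0`, `0 ≪ f`), or both have positive leading coefficients and
their roots interleave as `⋯ ≤ α₂ ≤ β₂ ≤ α₁ ≤ β₁`. -/
def Interleaver (f g : Polynomial ℝ) : Prop :=
  RealRooted f ∧ RealRooted g ∧
    (f = 0 ∨ g = 0 ∨
      (0 < f.leadingCoeff ∧ 0 < g.leadingCoeff ∧ RootsInterleave f g))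

/-- A sequence of real-rooted polynomials is interlacing if `f i ≪ f j` whenever `i < j`. -/
def IsInterlacingSeq {n : ℕ} (f : Fin n → Polynomial ℝ) : Prop :=
  (∀ i, RealRooted (f i)) ∧ ∀ i j : Fin n, i < j → Interleaver (f i) (f j)

/-- Membership in `F_n⁺`: interlacing sequences all of whose members have
nonnegative coefficients. -/
def MemFPlus {n : ℕ} (f : Fin n → Polynomial ℝ) : Prop :=
  IsInterlacingSeq f ∧ ∀ (i : Fin n) (k : ℕ), 0 ≤ (f i).coeff k

/-- An `m × n` matrix `G` of polynomials maps `F_n⁺` to `F_m⁺` if for every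
`(f₁, …, f_n) ∈ F_n⁺` the sequence `(g₁, …, g_m)` with `g_k = ∑ i, G k i * f i`
belongs to `F_m⁺`. -/
def MapsFPlus {m n : ℕ} (G : Matrix (Fin m) (Fin n) (Polynomial ℝ)) : Prop :=
  ∀ f : Fin n → Polynomial ℝ, MemFPlus f → MemFPlus fun k => ∑ i, G k i * f i

/-! Feeding the vector with `x + 1` in position `j` and `0` elsewhere (which lies in `F_n⁺`,
since every pair in it contains `0`) into a matrix whose `j`-th column is `(x, 1)ᵀ` yields
`(x (x + 1), x + 1)`. Its largest zeros are `0 > -1`, the wrong way round for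
`x (x + 1) ≪ x + 1`. -/

lemma realRooted_X_add_C (c : ℝ) : RealRooted (X + C c) := by
  refine Or.inr fun z hz => ?_
  simp only [map_add, aeval_X, aeval_C, Complex.coe_algebraMap] at hz
  rw [eq_neg_of_add_eq_zero_left hz, Complex.neg_im, Complex.ofReal_im, neg_zero]

lemma coeff_X_add_C_nonneg {c : ℝ} (hc : 0 ≤ c) (k : ℕ) : 0 ≤ (X + C c).coeff k := by
  rw [coeff_add, coeff_X, coeff_C]
  split_ifs <;> linarith

lemma rootsDesc_X_add_C (c : ℝ) : rootsDesc (X + C c) = [-c] := by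
  rw [rootsDesc, roots_X_add_C, Multiset.sort_singleton]

lemma rootsDesc_X_mul_X_add_C {c : ℝ} (hc : 0 ≤ c) : rootsDesc (X * (X + C c)) = [0, -c] := by
  rw [rootsDesc, roots_mul (mul_ne_zero X_ne_zero (X_add_C_ne_zero c)), roots_X, roots_X_add_C,
    Multiset.singleton_add, Multiset.sort_cons _ _ _ (by simpa using hc), Multiset.sort_singleton]

lemma not_interleaver_X_mul_X_add_C {c : ℝ} (hc : 0 < c) :
    ¬ Interleaver (X * (X + C c)) (X + C c) := by
  rintro ⟨-, -, h | h | ⟨-, -, hle, -⟩⟩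
  · exact mul_ne_zero X_ne_zero (X_add_C_ne_zero c) h
  · exact X_add_C_ne_zero c h
  · have := hle 0 (by simp [rootsDesc_X_mul_X_add_C hc.le]) (by simp [rootsDesc_X_add_C])
    simp only [rootsDesc_X_mul_X_add_C hc.le, rootsDesc_X_add_C, List.get_eq_getElem,
      List.getElem_cons_zero] at this
    linarith

lemma memFPlus_pi_single {n : ℕ} (j : Fin n) {p : ℝ[X]} (hp : RealRooted p)
    (hcoeff : ∀ k, 0 ≤ p.coeff k) : MemFPlus (Pi.single j p) := by
  have hrr : ∀ i, RealRooted ((Pi.single j p : Fin n → ℝ[X]) i) := fun i => by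
    rcases eq_or_ne i j with rfl | hij
    · simpa using hp
    · rw [Pi.single_eq_of_ne hij]
      exact Or.inl rfl
  refine ⟨⟨hrr, fun i i' hii' => ⟨hrr i, hrr i', ?_⟩⟩, fun i k => ?_⟩
  · rcases eq_or_ne i j with rfl | hij
    · exact Or.inr (Or.inl (by simp [hii'.ne']))
    · exact Or.inl (by simp [hij])
  · rcases eq_or_ne i j with rfl | hij
    · simpa using hcoeff k
    · simp [hij]

lemma MapsFPlus.memFPlus_col_mul {m n : ℕ} {G : Matrix (Fin m) (Fin n) ℝ[X]} (hG : MapsFPlus G)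
    (j : Fin n) {p : ℝ[X]} (hp : RealRooted p) (hcoeff : ∀ k, 0 ≤ p.coeff k) :
    MemFPlus fun k => G k j * p := by
  convert hG _ (memFPlus_pi_single j hp hcoeff) using 2 with k
  exact (dotProduct_single _ _ _).symm

lemma not_mapsFPlus_of_col_eq {n : ℕ} (G : Matrix (Fin 2) (Fin n) ℝ[X]) (j : Fin n)
    (h₀ : G 0 j = X) (h₁ : G 1 j = 1) : ¬ MapsFPlus G := by
  intro hG
  have hmem := hG.memFPlus_col_mul j (realRooted_X_add_C 1) (coeff_X_add_C_nonneg zero_le_one)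
  have := hmem.1.2 0 1 Fin.zero_lt_one
  simp only [h₀, h₁, one_mul] at this
  exact not_interleaver_X_mul_X_add_C one_pos this

theorem stmt11_general (a b : Polynomial ℝ) :
    ¬ MapsFPlus (!![Polynomial.X, a; 1, b] : Matrix (Fin 2) (Fin 2) (Polynomial ℝ)) ∧
    ¬ MapsFPlus (!![a, Polynomial.X; b, 1] : Matrix (Fin 2) (Fin 2) (Polynomial ℝ)) :=
  ⟨not_mapsFPlus_of_col_eq _ 0 rfl rfl, not_mapsFPlus_of_col_eq _ 1 rfl rfl⟩

/-- No `2 × 2` matrix over `{0, 1, x}` having a column equal to `(x, 1)ᵀ` maps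
`F₂⁺` to `F₂⁺`. -/
theorem stmt11 (a b : Polynomial ℝ)
    (ha : a = 0 ∨ a = 1 ∨ a = Polynomial.X) (hb : b = 0 ∨ b = 1 ∨ b = Polynomial.X) :
    ¬ MapsFPlus (!![Polynomial.X, a; 1, b] : Matrix (Fin 2) (Fin 2) (Polynomial ℝ)) ∧
    ¬ MapsFPlus (!![a, Polynomial.X; b, 1] : Matrix (Fin 2) (Fin 2) (Polynomial ℝ)) :=
  stmt11_general a b
end

section
/- For any entries a, b ∈ {0, 1, x}, neither of the 2 × 2 matrices [[1, x], [a, b]] nor [[a, b], [1, x]] (i.e., any 2 × 2 matrix over {0, 1, x} having a row equal to (1, x)) maps F₂⁺ to F₂⁺. -/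
open Polynomial Finset

lemma realRooted_one : RealRooted (1 : ℝ[X]) :=
  Or.inr fun z h => by simp at h

lemma realRooted_X : RealRooted (X : ℝ[X]) :=
  Or.inr fun z h => by simp_all

lemma interleaver_one_X : Interleaver 1 X := by
  refine ⟨realRooted_one, realRooted_X, Or.inr (Or.inr ⟨by simp, by simp, ?_⟩)⟩
  constructor <;> intro i h1 <;> simp [rootsDesc] at h1

lemma memFPlus_one_X : MemFPlus ![(1 : ℝ[X]), X] := by
  have hR : ∀ i : Fin 2, RealRooted (![1, X] i) := by
    intro i
    fin_cases i
    exacts [realRooted_one, realRooted_X]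
  refine ⟨⟨hR, fun i j hij => ?_⟩, fun i k => ?_⟩
  · fin_cases i <;> fin_cases j <;> simp at hij
    exact interleaver_one_X
  · fin_cases i <;> simp [coeff_one, coeff_X, apply_ite]

lemma not_realRooted_one_add_X_mul_X : ¬ RealRooted (1 + X * X : ℝ[X]) := by
  rintro (h | h)
  · simpa using congrArg (coeff · 0) h
  · simpa using h Complex.I (by simp)

/-- The row `(1, x)` sends `(1, x) ∈ F₂⁺` to `1 + x²`, which has the zeros `± i`. -/
lemma not_mapsFPlus_of_row_eq_one_X {m : ℕ} (G : Matrix (Fin m) (Fin 2) ℝ[X]) (k : Fin m)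
    (hk : G k = ![1, X]) : ¬ MapsFPlus G := by
  intro hG
  have h := (hG _ memFPlus_one_X).1.1 k
  simp only [Fin.sum_univ_two, hk, Matrix.cons_val_zero, Matrix.cons_val_one, one_mul] at h
  exact not_realRooted_one_add_X_mul_X h

theorem stmt12_general (a b : Polynomial ℝ) :
    ¬ MapsFPlus (!![1, Polynomial.X; a, b] : Matrix (Fin 2) (Fin 2) (Polynomial ℝ)) ∧
    ¬ MapsFPlus (!![a, b; 1, Polynomial.X] : Matrix (Fin 2) (Fin 2) (Polynomial ℝ)) :=
  ⟨not_mapsFPlus_of_row_eq_one_X _ 0 rfl, not_mapsFPlus_of_row_eq_one_X _ 1 rfl⟩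

/-- No `2 × 2` matrix over `{0, 1, x}` having a row equal to `(1, x)` maps
`F₂⁺` to `F₂⁺`. -/
theorem stmt12 (a b : Polynomial ℝ)
    (ha : a = 0 ∨ a = 1 ∨ a = Polynomial.X) (hb : b = 0 ∨ b = 1 ∨ b = Polynomial.X) :
    ¬ MapsFPlus (!![1, Polynomial.X; a, b] : Matrix (Fin 2) (Fin 2) (Polynomial ℝ)) ∧
    ¬ MapsFPlus (!![a, b; 1, Polynomial.X] : Matrix (Fin 2) (Fin 2) (Polynomial ℝ)) :=
  stmt12_general a b
end

section
/- Let n ≥ 1 and r ≥ 2 be integers and let γ = (γ₀, …, γ_{r−1}) be an integer sequence with 0 ≤ γ_i ≤ r−2 for all 0 ≤ i ≤ r−1 and |γ_{i+1} − γ_i| ≤ 1 for all 0 ≤ i ≤ r−2. Then the polynomial Σ_{w ∈ SW_γ(n,r)} x^{asc(w)} is real-rooted. -/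
open Polynomial Finset

/-- The number of ascents of a word `w = (w₀, …, w_n)`: indices `i ∈ {0, …, n-1}`
with `w_i < w_{i+1}`. -/
def asc {n r : ℕ} (w : Fin (n + 1) → Fin r) : ℕ :=
  (Finset.univ.filter fun j : Fin n => w j.castSucc < w j.succ).card

/-!
Fix `z` with `0 < z.im` and let `V_m(i)` be the sum of `z ^ asc w` over the words
`w = (w₀, …, w_m)` with `w₀ = 0`, `w_m = i` that obey the γ-condition. Appending a letter gives
`V_{m+1}(i) = z * ∑_{j < i - γ_i} V_m(j) + ∑_{j > i + γ_i} V_m(j)`, and the condition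
`|γ_{i+1} - γ_i| ≤ 1` makes both thresholds `i ∓ γ_i` nondecreasing in `i`. This recursion
preserves the invariant that the arguments of `V_m(0), …, V_m(r-1)` increase with `i` inside a
window of width `arg z`, and that invariant prevents the two parts of the recursion from
cancelling. So `V_n(0) ≠ 0` as soon as some word exists, i.e. the ascent
polynomial has no zero in the upper half-plane, hence (having real coefficients) none off the
real line.
-/

open ComplexConjugate

namespace SmirnovWord

/-- `x * conj y` lies in the closed cone spanned by `1` and `conj z`: for nonzero `x`, `y` and
`0 < arg z < π` this says `arg y - arg x ∈ [0, arg z]` modulo `2π`. -/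
def Precedes (z x y : ℂ) : Prop :=
  0 ≤ (y * conj x).im ∧ 0 ≤ (z * (x * conj y)).im

section Precedes

variable {z : ℂ}

lemma precedes_refl (hz : 0 ≤ z.im) (x : ℂ) : Precedes z x x := by
  simp only [Precedes, Complex.mul_conj, Complex.ofReal_im, le_refl, Complex.mul_im,
    Complex.ofReal_re, mul_zero, zero_add, true_and]
  exact mul_nonneg hz (Complex.normSq_nonneg x)

lemma precedes_zero_left (y : ℂ) : Precedes z 0 y := by simp [Precedes]

lemma precedes_zero_right (x : ℂ) : Precedes z x 0 := by simp [Precedes]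

lemma Precedes.add_left {x₁ x₂ y : ℂ} (h₁ : Precedes z x₁ y) (h₂ : Precedes z x₂ y) :
    Precedes z (x₁ + x₂) y := by
  simp only [Precedes, map_add, mul_add, add_mul, Complex.add_im] at *
  constructor <;> linarith [h₁.1, h₁.2, h₂.1, h₂.2]

lemma Precedes.add_right {x y₁ y₂ : ℂ} (h₁ : Precedes z x y₁) (h₂ : Precedes z x y₂) :
    Precedes z x (y₁ + y₂) := by
  simp only [Precedes, map_add, mul_add, add_mul, Complex.add_im] at *
  constructor <;> linarith [h₁.1, h₁.2, h₂.1, h₂.2]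

lemma Precedes.add_add {X Y Z : ℂ} (hz : 0 ≤ z.im) (hXY : Precedes z X Y)
    (hXZ : Precedes z X Z) (hYZ : Precedes z Y Z) : Precedes z (X + Y) (Y + Z) :=
  (hXY.add_right hXZ).add_left ((precedes_refl hz Y).add_right hYZ)

lemma precedes_sum_left {ι : Type*} {s : Finset ι} {x : ι → ℂ} {y : ℂ}
    (h : ∀ i ∈ s, Precedes z (x i) y) : Precedes z (∑ i ∈ s, x i) y :=
  Finset.sum_induction x (Precedes z · y) (fun _ _ => Precedes.add_left)
    (precedes_zero_left y) h

lemma precedes_sum_right {ι : Type*} {s : Finset ι} {x : ℂ} {y : ι → ℂ}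
    (h : ∀ i ∈ s, Precedes z x (y i)) : Precedes z x (∑ i ∈ s, y i) :=
  Finset.sum_induction y (Precedes z x) (fun _ _ => Precedes.add_right)
    (precedes_zero_right x) h

lemma Precedes.mul_left {x y : ℂ} (h : Precedes z x y) (c : ℂ) :
    Precedes z (c * x) (c * y) := by
  have e₁ : c * y * conj (c * x) = Complex.normSq c * (y * conj x) := by
    rw [← Complex.mul_conj, map_mul]; ring
  have e₂ : z * (c * x * conj (c * y)) = Complex.normSq c * (z * (x * conj y)) := by
    rw [← Complex.mul_conj, map_mul]; ring
  rw [Precedes, e₁, e₂, Complex.im_ofReal_mul, Complex.im_ofReal_mul]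
  exact ⟨mul_nonneg (Complex.normSq_nonneg c) h.1, mul_nonneg (Complex.normSq_nonneg c) h.2⟩

lemma Precedes.mul_twist {x y : ℂ} (h : Precedes z x y) : Precedes z y (z * x) := by
  have e : z * (y * conj (z * x)) = Complex.normSq z * (y * conj x) := by
    rw [← Complex.mul_conj, map_mul]; ring
  rw [Precedes, e, Complex.im_ofReal_mul, mul_assoc]
  exact ⟨h.2, mul_nonneg (Complex.normSq_nonneg z) h.1⟩

lemma eq_zero_of_precedes_neg (hz : 0 < z.im) {x : ℂ} (h : Precedes z x (-x)) : x = 0 := by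
  have h₂ := h.2
  rw [map_neg, mul_neg, mul_neg, Complex.neg_im, Complex.mul_conj, Complex.im_mul_ofReal] at h₂
  have : Complex.normSq x ≤ 0 := by nlinarith
  exact Complex.normSq_eq_zero.1 (le_antisymm this (Complex.normSq_nonneg x))

end Precedes

section Chain

variable {ι : Type*} {z : ℂ} {v : ι → ℂ}

def IsPrecedesChain [LE ι] (z : ℂ) (v : ι → ℂ) : Prop :=
  ∀ a b, a ≤ b → Precedes z (v a) (v b)

lemma IsPrecedesChain.sum_sum [LE ι] (hv : IsPrecedesChain z v) {s t : Finset ι}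
    (h : ∀ j ∈ s, ∀ k ∈ t, j ≤ k) : Precedes z (∑ j ∈ s, v j) (∑ k ∈ t, v k) :=
  precedes_sum_left fun j hj => precedes_sum_right fun k hk => hv j k (h j hj k hk)

lemma IsPrecedesChain.sum_filter [LE ι] [Fintype ι] (hv : IsPrecedesChain z v)
    {A B : ι → Prop} [DecidablePred A] [DecidablePred B] (h : ∀ j k, A j → B k → j ≤ k) :
    Precedes z (∑ j with A j, v j) (∑ k with B k, v k) :=
  hv.sum_sum fun j hj k hk => h j k (Finset.mem_filter.1 hj).2 (Finset.mem_filter.1 hk).2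

/-- Pair the sum with its first nonzero term `v m`: `(z * (v m * conj (v k))).im ≥ 0` for every
`k`, with strict inequality at `k = m`. -/
lemma IsPrecedesChain.sum_ne_zero [LinearOrder ι] (hv : IsPrecedesChain z v) (hz : 0 < z.im)
    {s : Finset ι} {a : ι} (ha : a ∈ s) (hva : v a ≠ 0) : ∑ j ∈ s, v j ≠ 0 := by
  classical
  set m := (s.filter (v · ≠ 0)).min' ⟨a, Finset.mem_filter.2 ⟨ha, hva⟩⟩
  obtain ⟨hms, hvm⟩ := Finset.mem_filter.1 (Finset.min'_mem _ _ : m ∈ s.filter (v · ≠ 0))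
  have hpos : 0 < (z * (v m * conj (∑ j ∈ s, v j))).im := by
    rw [map_sum, Finset.mul_sum, Finset.mul_sum, Complex.im_sum]
    refine Finset.sum_pos' (fun j hj => ?_) ⟨m, hms, ?_⟩
    · by_cases hmj : m ≤ j
      · exact (hv m j hmj).2
      · have hvj : v j = 0 := by
          by_contra hvj
          exact hmj (Finset.min'_le _ j (Finset.mem_filter.2 ⟨hj, hvj⟩))
        simp [hvj]
    · rw [Complex.mul_conj, Complex.im_mul_ofReal]
      exact mul_pos hz (Complex.normSq_pos.2 hvm)
  intro hsum
  simp [hsum] at hpos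

end Chain

section Transfer

variable {r : ℕ}

def offBandSum (z : ℂ) (v : Fin r → ℂ) (p q : ℤ) : ℂ :=
  z * ∑ j with (j.val : ℤ) < p, v j + ∑ j with q < (j.val : ℤ), v j

/-- Write the two sums as `X + Y` and `Y + Z` (with `Y = z * L + H` the common part); then
`X`, `Y`, `Z` precede each other because they are built from the consecutive index blocks
`L < M₁ < M₂ < X₂ < H`. -/
lemma IsPrecedesChain.precedes_offBandSum {z : ℂ} {v : Fin r → ℂ} (hv : IsPrecedesChain z v)
    (hz : 0 ≤ z.im) {p q p' q' : ℤ} (hp : p ≤ p') (hq : q ≤ q') (hpq : p ≤ q + 1)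
    (hpq' : p' ≤ q' + 1) :
    Precedes z (offBandSum z v p q) (offBandSum z v p' q') := by
  set L := ∑ j with (j.val : ℤ) < p, v j
  set M₁ := ∑ j with p ≤ (j.val : ℤ) ∧ (j.val : ℤ) ≤ q ∧ (j.val : ℤ) < p', v j
  set M₂ := ∑ j with q < (j.val : ℤ) ∧ (j.val : ℤ) < p', v j
  set X₂ := ∑ j with p' ≤ (j.val : ℤ) ∧ q < (j.val : ℤ) ∧ (j.val : ℤ) ≤ q', v j
  set H := ∑ j with q' < (j.val : ℤ), v j
  have hlow : ∑ j with (j.val : ℤ) < p', v j = L + (M₁ + M₂) := by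
    simp only [L, M₁, M₂, Finset.sum_filter, ← Finset.sum_add_distrib]
    refine Finset.sum_congr rfl fun j _ => ?_
    split_ifs <;> first | omega | simp
  have hhigh : ∑ j with q < (j.val : ℤ), v j = M₂ + (X₂ + H) := by
    simp only [M₂, X₂, H, Finset.sum_filter, ← Finset.sum_add_distrib]
    refine Finset.sum_congr rfl fun j _ => ?_
    split_ifs <;> first | omega | simp
  have hF : offBandSum z v p q = (M₂ + X₂) + (z * L + H) := by
    rw [offBandSum, hhigh]; ring
  have hF' : offBandSum z v p' q' = (z * L + H) + (z * M₁ + z * M₂) := by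
    rw [offBandSum, hlow]; ring
  have LM₁ : Precedes z L M₁ := hv.sum_filter fun j k _ _ => by omega
  have LM₂ : Precedes z L M₂ := hv.sum_filter fun j k _ _ => by omega
  have LX₂ : Precedes z L X₂ := hv.sum_filter fun j k _ _ => by omega
  have M₁M₂ : Precedes z M₁ M₂ := hv.sum_filter fun j k _ _ => by omega
  have M₁X₂ : Precedes z M₁ X₂ := hv.sum_filter fun j k _ _ => by omega
  have M₁H : Precedes z M₁ H := hv.sum_filter fun j k _ _ => by omega
  have M₂X₂ : Precedes z M₂ X₂ := hv.sum_filter fun j k _ _ => by omega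
  have M₂H : Precedes z M₂ H := hv.sum_filter fun j k _ _ => by omega
  have X₂H : Precedes z X₂ H := hv.sum_filter fun j k _ _ => by omega
  rw [hF, hF']
  refine Precedes.add_add hz ?_ ?_ ?_
  · exact (LM₂.mul_twist.add_right M₂H).add_left (LX₂.mul_twist.add_right X₂H)
  · exact (M₁M₂.mul_twist.add_right (precedes_refl hz M₂).mul_twist).add_left
      (M₁X₂.mul_twist.add_right M₂X₂.mul_twist)
  · exact ((LM₁.mul_left z).add_right (LM₂.mul_left z)).add_left
      (M₁H.mul_twist.add_right M₂H.mul_twist)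

def Step (γ : Fin r → ℤ) (a b : Fin r) : Prop :=
  γ b < |((b : ℕ) : ℤ) - ((a : ℕ) : ℤ)|

instance (γ : Fin r → ℤ) (a b : Fin r) : Decidable (Step γ a b) :=
  inferInstanceAs (Decidable (_ < _))

lemma step_iff (γ : Fin r → ℤ) (a b : Fin r) :
    Step γ a b ↔ (a.val : ℤ) < b.val - γ b ∨ b.val + γ b < (a.val : ℤ) := by
  rw [Step, lt_abs]
  omega

def transfer {R : Type*} [CommSemiring R] (γ : Fin r → ℤ) (z : R) (v : Fin r → R)
    (i : Fin r) : R :=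
  ∑ j with Step γ j i, (if j < i then z else 1) * v j

lemma transfer_eq_offBandSum {γ : Fin r → ℤ} {i : Fin r} (hγ : 0 ≤ γ i) (z : ℂ)
    (v : Fin r → ℂ) : transfer γ z v i = offBandSum z v (i.val - γ i) (i.val + γ i) := by
  simp only [transfer, offBandSum, Finset.sum_filter, Finset.mul_sum, ← Finset.sum_add_distrib,
    step_iff]
  refine Finset.sum_congr rfl fun j _ => ?_
  split_ifs <;> first | omega | simp

lemma monotone_val_sub_and_val_add {γ : Fin r → ℤ}
    (hγ : ∀ i j : Fin r, (j : ℕ) = (i : ℕ) + 1 → |γ j - γ i| ≤ 1) :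
    (Monotone fun i : Fin r => (i.val : ℤ) - γ i) ∧ Monotone fun i : Fin r => (i.val : ℤ) + γ i := by
  cases r with
  | zero => exact ⟨fun a => a.elim0, fun a => a.elim0⟩
  | succ k =>
    simp only [Fin.monotone_iff_le_succ]
    refine ⟨fun i => ?_, fun i => ?_⟩ <;>
    · have := abs_le.1 (hγ i.castSucc i.succ (by simp))
      simp only [Fin.val_castSucc, Fin.val_succ]
      omega

variable {γ : Fin r → ℤ} {z : ℂ} {v : Fin r → ℂ}

lemma isPrecedesChain_transfer (hv : IsPrecedesChain z v) (hz : 0 ≤ z.im) (hγ : ∀ i, 0 ≤ γ i)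
    (hlo : Monotone fun i : Fin r => (i.val : ℤ) - γ i)
    (hhi : Monotone fun i : Fin r => (i.val : ℤ) + γ i) :
    IsPrecedesChain z (transfer γ z v) := fun a b hab => by
  rw [transfer_eq_offBandSum (hγ a), transfer_eq_offBandSum (hγ b)]
  exact hv.precedes_offBandSum hz (hlo hab) (hhi hab) (by linarith [hγ a]) (by linarith [hγ b])

/-- The two parts `z * L` and `H` of the off-band sum satisfy `Precedes z H (z * L)`, so they cannot
cancel. -/
lemma IsPrecedesChain.transfer_ne_zero (hv : IsPrecedesChain z v) (hz : 0 < z.im) {i j : Fin r}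
    (hγ : 0 ≤ γ i) (hj : Step γ j i) (hvj : v j ≠ 0) : transfer γ z v i ≠ 0 := by
  rw [transfer_eq_offBandSum hγ, offBandSum]
  set L := ∑ k with (k.val : ℤ) < i.val - γ i, v k
  set H := ∑ k with (i.val : ℤ) + γ i < k.val, v k
  intro hsum
  have hHL : Precedes z H (z * L) := (hv.sum_filter fun k l _ _ => by omega).mul_twist
  have hH : H = 0 :=
    eq_zero_of_precedes_neg hz (by rwa [eq_neg_of_add_eq_zero_left hsum] at hHL)
  have hL : L = 0 := by
    rw [hH, add_zero] at hsum
    exact (mul_eq_zero.1 hsum).resolve_left fun h => by simp [h] at hz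
  rcases (step_iff γ j i).1 hj with hlt | hgt
  · exact hv.sum_ne_zero hz (Finset.mem_filter.2 ⟨Finset.mem_univ j, hlt⟩) hvj hL
  · exact hv.sum_ne_zero hz (Finset.mem_filter.2 ⟨Finset.mem_univ j, hgt⟩) hvj hH

end Transfer

section Words

variable {r : ℕ}

def IsSmirnovPrefix (γ : Fin r → ℤ) {m : ℕ} (w : Fin (m + 1) → Fin r) : Prop :=
  (w 0 : ℕ) = 0 ∧ ∀ j : Fin m, Step γ (w j.castSucc) (w j.succ)

instance (γ : Fin r → ℤ) {m : ℕ} (w : Fin (m + 1) → Fin r) : Decidable (IsSmirnovPrefix γ w) :=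
  inferInstanceAs (Decidable (_ ∧ _))

lemma isSmirnovPrefix_snoc (γ : Fin r → ℤ) {m : ℕ} (u : Fin (m + 1) → Fin r) (x : Fin r) :
    IsSmirnovPrefix γ (Fin.snoc u x : Fin (m + 2) → Fin r) ↔
      IsSmirnovPrefix γ u ∧ Step γ (u (Fin.last m)) x := by
  simp only [IsSmirnovPrefix, Fin.forall_fin_succ', Fin.succ_castSucc, Fin.snoc_castSucc,
    Fin.succ_last, Fin.snoc_last, ← Fin.castSucc_zero]
  tauto

lemma asc_snoc {m : ℕ} (u : Fin (m + 1) → Fin r) (x : Fin r) :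
    asc (Fin.snoc u x : Fin (m + 2) → Fin r) = asc u + if u (Fin.last m) < x then 1 else 0 := by
  simp only [asc, Finset.card_filter, Fin.sum_univ_castSucc, Fin.succ_castSucc,
    Fin.snoc_castSucc, Fin.succ_last, Fin.snoc_last]

def wordSum {R : Type*} [CommSemiring R] (γ : Fin r → ℤ) (z : R) (m : ℕ) (i : Fin r) : R :=
  ∑ w : Fin (m + 1) → Fin r with IsSmirnovPrefix γ w ∧ w (Fin.last m) = i, z ^ asc w

section CommSemiring

variable {R : Type*} [CommSemiring R] (γ : Fin r → ℤ) (z : R)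

lemma wordSum_zero (i : Fin r) : wordSum γ z 0 i = if (i : ℕ) = 0 then 1 else 0 := by
  rw [wordSum, Finset.sum_filter, Fintype.sum_equiv (Equiv.funUnique (Fin 1) (Fin r)) _
    (fun x => if x = i then (if (i : ℕ) = 0 then 1 else 0) else 0), Finset.sum_ite_eq']
  · simp
  · intro w
    simp only [IsSmirnovPrefix, asc, Equiv.funUnique_apply, Fin.default_eq_zero, Fin.last_zero,
      Finset.univ_eq_empty, Finset.filter_empty, Finset.card_empty, pow_zero, IsEmpty.forall_iff,
      and_true]
    split_ifs <;> simp_all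

lemma wordSum_succ (m : ℕ) (i : Fin r) :
    wordSum γ z (m + 1) i = transfer γ z (wordSum γ z m) i := by
  have hsnoc : wordSum γ z (m + 1) i =
      ∑ u with IsSmirnovPrefix γ u ∧ Step γ (u (Fin.last m)) i,
        (if u (Fin.last m) < i then z else 1) * z ^ asc u := by
    refine Finset.sum_nbij' Fin.init (Fin.snoc · i) ?_ ?_ ?_ ?_ ?_ <;>
      simp only [Finset.mem_filter, Finset.mem_univ, true_and]
    · intro w ⟨hw, hlast⟩
      rwa [← Fin.snoc_init_self w, hlast, isSmirnovPrefix_snoc] at hw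
    · exact fun u hu => ⟨(isSmirnovPrefix_snoc γ u i).2 hu, Fin.snoc_last _ _⟩
    · intro w ⟨_, hlast⟩
      rw [← hlast, Fin.snoc_init_self]
    · exact fun u _ => Fin.init_snoc _ _
    · intro w ⟨_, hlast⟩
      conv_lhs => rw [← Fin.snoc_init_self w, hlast, asc_snoc, pow_add]
      split_ifs <;> simp [mul_comm]
  rw [hsnoc, transfer, ← Finset.sum_fiberwise_of_maps_to (g := fun u => u (Fin.last m))
    (t := Finset.univ.filter (Step γ · i)) (by simp +contextual)]
  refine Finset.sum_congr rfl fun j hj => ?_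
  rw [Finset.mem_filter] at hj
  rw [wordSum, Finset.mul_sum, Finset.filter_filter]
  refine Finset.sum_congr (Finset.filter_congr fun u _ => ?_) fun u hu => ?_
  · exact ⟨fun ⟨⟨hu, _⟩, hlast⟩ => ⟨hu, hlast⟩, fun ⟨hu, hlast⟩ => ⟨⟨hu, hlast ▸ hj.2⟩, hlast⟩⟩
  · rw [(Finset.mem_filter.1 hu).2.2]

end CommSemiring

variable {γ : Fin r → ℤ} {z : ℂ}

lemma isPrecedesChain_wordSum (hz : 0 ≤ z.im) (hγ : ∀ i, 0 ≤ γ i)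
    (hlo : Monotone fun i : Fin r => (i.val : ℤ) - γ i)
    (hhi : Monotone fun i : Fin r => (i.val : ℤ) + γ i) (m : ℕ) :
    IsPrecedesChain z (wordSum γ z m) := by
  induction m with
  | zero =>
    intro a b _
    rw [wordSum_zero, wordSum_zero]
    split_ifs
    exacts [precedes_refl hz 1, precedes_zero_right _, precedes_zero_left _, precedes_zero_left _]
  | succ m ih =>
    rw [funext (wordSum_succ γ z m)]
    exact isPrecedesChain_transfer ih hz hγ hlo hhi

lemma wordSum_ne_zero (hz : 0 < z.im) (hγ : ∀ i, 0 ≤ γ i)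
    (hlo : Monotone fun i : Fin r => (i.val : ℤ) - γ i)
    (hhi : Monotone fun i : Fin r => (i.val : ℤ) + γ i) {m : ℕ} {w : Fin (m + 1) → Fin r}
    (hw : IsSmirnovPrefix γ w) : wordSum γ z m (w (Fin.last m)) ≠ 0 := by
  induction m with
  | zero =>
    rw [wordSum_zero, Fin.last_zero, if_pos hw.1]
    exact one_ne_zero
  | succ m ih =>
    rw [← Fin.snoc_init_self w, isSmirnovPrefix_snoc] at hw
    rw [wordSum_succ]
    exact (isPrecedesChain_wordSum hz.le hγ hlo hhi m).transfer_ne_zero hz (hγ _) hw.2 (ih hw.1)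

end Words

lemma realRooted_sum_X_pow {ι : Type*} (s : Finset ι) (e : ι → ℕ)
    (h : ∀ z : ℂ, 0 < z.im → s.Nonempty → ∑ i ∈ s, z ^ e i ≠ 0) :
    RealRooted (∑ i ∈ s, X ^ e i) := by
  rcases s.eq_empty_or_nonempty with hs | hs
  · exact Or.inl (by simp [hs])
  have hroot : ∀ z : ℂ, 0 < z.im → aeval z (∑ i ∈ s, (X : ℝ[X]) ^ e i) ≠ 0 := fun z hz => by
    simpa using h z hz hs
  refine Or.inr fun z hz => ?_
  by_contra him
  rcases lt_or_gt_of_ne him with hlt | hgt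
  · refine hroot (conj z) (by simpa using hlt) ?_
    rw [← Complex.conjAe_coe, Polynomial.aeval_algHom_apply, hz, map_zero]
  · exact hroot z hgt hz

end SmirnovWord

theorem stmt16_general (n r : ℕ) (γ : Fin r → ℤ)
    (hγ1 : ∀ i, 0 ≤ γ i ∧ γ i ≤ (r : ℤ) - 2)
    (hγ2 : ∀ i j : Fin r, (j : ℕ) = (i : ℕ) + 1 → |γ j - γ i| ≤ 1) :
    RealRooted (∑ w ∈ Finset.univ.filter (fun w : Fin (n + 1) → Fin r =>
      (w 0 : ℕ) = 0 ∧ (w (Fin.last n) : ℕ) = 0 ∧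
        ∀ j : Fin n, |((w j.succ : ℕ) : ℤ) - ((w j.castSucc : ℕ) : ℤ)| > γ (w j.succ)),
      Polynomial.X ^ asc w) := by
  obtain ⟨hlo, hhi⟩ := SmirnovWord.monotone_val_sub_and_val_add hγ2
  refine SmirnovWord.realRooted_sum_X_pow _ _ fun z hz ⟨w₀, hw₀⟩ => ?_
  simp only [Finset.mem_filter, Finset.mem_univ, true_and] at hw₀
  convert SmirnovWord.wordSum_ne_zero hz (fun i => (hγ1 i).1) hlo hhi (w := w₀)
    ⟨hw₀.1, hw₀.2.2⟩ using 1
  refine Finset.sum_congr (Finset.filter_congr fun w _ => ?_) fun _ _ => rfl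
  simp only [SmirnovWord.IsSmirnovPrefix, SmirnovWord.Step, Fin.ext_iff, hw₀.2.1]
  tauto

/-- The ascent generating polynomial over the generalized Smirnov words
`SW_γ(n,r)` is real-rooted. -/
theorem stmt16 (n r : ℕ) (hn : 1 ≤ n) (hr : 2 ≤ r) (γ : Fin r → ℤ)
    (hγ1 : ∀ i, 0 ≤ γ i ∧ γ i ≤ (r : ℤ) - 2)
    (hγ2 : ∀ i j : Fin r, (j : ℕ) = (i : ℕ) + 1 → |γ j - γ i| ≤ 1) :
    RealRooted (∑ w ∈ Finset.univ.filter (fun w : Fin (n + 1) → Fin r =>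
      (w 0 : ℕ) = 0 ∧ (w (Fin.last n) : ℕ) = 0 ∧
        ∀ j : Fin n, |((w j.succ : ℕ) : ℤ) - ((w j.castSucc : ℕ) : ℤ)| > γ (w j.succ)),
      Polynomial.X ^ asc w) :=
  stmt16_general n r γ hγ1 hγ2
end
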